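/- arXiv:quant-ph/0512021 — 2 statements merged into one kernel-verified Lean document; each statement's English description precedes it below -/
import Mathlib

section
/- For any density matrix σ on (ℂ²)^{⊗m}, the average over y ∈ {1,2,3}^m of |tr(σ_y σ)| is at most (2/3)^{m/2}, i.e., 3^{-m} Σ_{y ∈ {1,2,3}^m} |tr(σ_y σ)| ≤ (2/3)^{m/2}. -/
/-!
The Pauli strings satisfy the completeness relation
`∑_y (σ_y)_{ab} (σ_y)_{cd} = 2^m δ_{ad} δ_{bc}`, hence `∑_y tr(σ_y σ)² = 2^m tr(σ²) ≤ 2^m` for a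
density matrix `σ` (the traces are real since `σ_y` and `σ` are Hermitian). Dropping the strings
containing an identity factor and applying Cauchy–Schwarz to the remaining `3^m` terms gives
`(∑_y |tr(σ_y σ)|)² ≤ 3^m · 2^m`.
-/

open Matrix BigOperators
open scoped ComplexOrder

noncomputable def pauli : Fin 4 → Matrix (Fin 2) (Fin 2) ℂ
  | 0 => 1
  | 1 => !![0, 1; 1, 0]
  | 2 => !![0, -Complex.I; Complex.I, 0]
  | 3 => !![1, 0; 0, -1]

/-- Tensor product σ_{y₁} ⊗ ⋯ ⊗ σ_{y_m} of Pauli matrices, as a matrix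
indexed by `Fin m → Fin 2`. -/
noncomputable def pauliT {m : ℕ} (y : Fin m → Fin 4) :
    Matrix (Fin m → Fin 2) (Fin m → Fin 2) ℂ :=
  Matrix.of fun r c => ∏ i, pauli (y i) (r i) (c i)

namespace Matrix

variable {n κ R : Type*} [Fintype n] [Fintype κ] [DecidableEq n] [CommSemiring R]

theorem sum_trace_mul_smul_of_sum_mul_eq {P : κ → Matrix n n R} {s : R}
    (hP : ∀ a b c d, ∑ k, P k a b * P k c d = if a = d ∧ b = c then s else 0)
    (A : Matrix n n R) :
    ∑ k, (P k * A).trace • P k = s • A := by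
  ext c d
  simp only [sum_apply, smul_apply, smul_eq_mul, trace, diag, mul_apply, Finset.sum_mul]
  rw [Finset.sum_comm]
  refine (Finset.sum_congr rfl fun a _ => Finset.sum_comm).trans ?_
  have hk : ∀ a b, ∑ k, P k a b * A b a * P k c d = (∑ k, P k a b * P k c d) * A b a :=
    fun a b => by rw [Finset.sum_mul]; exact Finset.sum_congr rfl fun _ _ => by ring
  simp only [hk, hP, ite_mul, zero_mul, ite_and, Finset.sum_ite_irrel, Finset.sum_const_zero, Finset.sum_ite_eq',
    Finset.mem_univ, if_true]

theorem sum_trace_mul_mul_trace_mul_of_sum_mul_eq {P : κ → Matrix n n R} {s : R}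
    (hP : ∀ a b c d, ∑ k, P k a b * P k c d = if a = d ∧ b = c then s else 0)
    (A B : Matrix n n R) :
    ∑ k, (P k * A).trace * (P k * B).trace = s * (A * B).trace := by
  calc ∑ k, (P k * A).trace * (P k * B).trace
      = ((∑ k, (P k * A).trace • P k) * B).trace := by
        simp only [Finset.sum_mul, trace_sum, smul_mul, trace_smul, smul_eq_mul]
    _ = s * (A * B).trace := by
        rw [sum_trace_mul_smul_of_sum_mul_eq hP, smul_mul, trace_smul, smul_eq_mul]

end Matrix

theorem Fintype.sum_prod_mul_prod_of_sum_mul_eq {ι n κ R : Type*} [Fintype ι] [DecidableEq ι]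
    [Fintype κ] [DecidableEq n] [CommSemiring R] {P : κ → Matrix n n R} {s : R}
    (hP : ∀ a b c d, ∑ k, P k a b * P k c d = if a = d ∧ b = c then s else 0)
    (a b c d : ι → n) :
    ∑ y : ι → κ, (∏ i, P (y i) (a i) (b i)) * ∏ i, P (y i) (c i) (d i)
      = if a = d ∧ b = c then s ^ Fintype.card ι else 0 := by
  simp only [← Finset.prod_mul_distrib]
  rw [← Fintype.prod_sum fun i k => P k (a i) (b i) * P k (c i) (d i)]
  simp only [hP, Finset.prod_ite_zero, Finset.prod_const, Finset.card_univ, funext_iff,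
    forall_and, Finset.mem_univ, true_implies]

theorem sum_pauli_mul_pauli (a b c d : Fin 2) :
    ∑ k, pauli k a b * pauli k c d = if a = d ∧ b = c then 2 else 0 := by
  fin_cases a <;> fin_cases b <;> fin_cases c <;> fin_cases d <;>
    simp [pauli, Fin.sum_univ_four, Complex.ext_iff] <;> norm_num

theorem star_pauli_apply (k : Fin 4) (a b : Fin 2) : star (pauli k a b) = pauli k b a := by
  fin_cases k <;> fin_cases a <;> fin_cases b <;> simp [pauli, one_apply]

theorem isHermitian_pauliT {m : ℕ} (y : Fin m → Fin 4) : (pauliT y).IsHermitian := by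
  ext r c
  simp only [conjTranspose_apply, pauliT, of_apply, star_prod, star_pauli_apply]

theorem sum_pauliT_mul_pauliT {m : ℕ} (a b c d : Fin m → Fin 2) :
    ∑ y, pauliT y a b * pauliT y c d = if a = d ∧ b = c then 2 ^ m else 0 := by
  simpa [pauliT] using Fintype.sum_prod_mul_prod_of_sum_mul_eq sum_pauli_mul_pauli a b c d

theorem Matrix.IsHermitian.ofReal_re_trace_mul {n : Type*} [Fintype n] {A B : Matrix n n ℂ}
    (hA : A.IsHermitian) (hB : B.IsHermitian) : ((A * B).trace.re : ℂ) = (A * B).trace := by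
  refine Complex.conj_eq_iff_re.mp ?_
  have h := trace_conjTranspose (A * B)
  rwa [conjTranspose_mul, hA.eq, hB.eq, trace_mul_comm, eq_comm] at h

theorem Matrix.IsHermitian.trace_mul_self {n 𝕜 : Type*} [Fintype n] [DecidableEq n] [RCLike 𝕜]
    {A : Matrix n n 𝕜} (hA : A.IsHermitian) :
    (A * A).trace = ∑ i, ((hA.eigenvalues i ^ 2 : ℝ) : 𝕜) := by
  conv_lhs => rw [hA.spectral_theorem, ← map_mul]
  rw [Unitary.conjStarAlgAut_apply, trace_mul_cycle, Unitary.coe_star_mul_self, one_mul,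
    diagonal_mul_diagonal, trace_diagonal]
  simp [sq]

theorem Matrix.PosSemidef.re_trace_mul_self_le {n 𝕜 : Type*} [Fintype n] [RCLike 𝕜]
    {A : Matrix n n 𝕜} (hA : A.PosSemidef) :
    RCLike.re (A * A).trace ≤ RCLike.re A.trace ^ 2 := by
  classical
  rw [hA.1.trace_mul_self, hA.1.trace_eq_sum_eigenvalues]
  simp only [map_sum, RCLike.ofReal_re]
  exact Finset.sum_sq_le_sq_sum_of_nonneg fun i _ => hA.eigenvalues_nonneg i

theorem Fintype.sum_comp_le_sum_of_injective {α β M : Type*} [Fintype α] [Fintype β]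
    [AddCommMonoid M] [PartialOrder M] [IsOrderedAddMonoid M] {e : α → β}
    (he : Function.Injective e) {f : β → M} (hf : 0 ≤ f) :
    ∑ a, f (e a) ≤ ∑ b, f b :=
  (Finset.sum_map Finset.univ ⟨e, he⟩ f).symm.le.trans (Finset.sum_le_univ_sum_of_nonneg hf)

theorem sum_sq_re_trace_pauliT_mul {m : ℕ} {σ : Matrix (Fin m → Fin 2) (Fin m → Fin 2) ℂ}
    (hσ : σ.IsHermitian) :
    ∑ y, (pauliT y * σ).trace.re ^ 2 = 2 ^ m * (σ * σ).trace.re := by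
  have h := sum_trace_mul_mul_trace_mul_of_sum_mul_eq sum_pauliT_mul_pauliT σ σ
  have hreal : ∀ y, (pauliT y * σ).trace * (pauliT y * σ).trace
      = (((pauliT y * σ).trace.re ^ 2 : ℝ) : ℂ) := fun y => by
    rw [Complex.ofReal_pow, (isHermitian_pauliT y).ofReal_re_trace_mul hσ, sq]
  simp only [hreal] at h
  apply Complex.ofReal_injective
  rw [Complex.ofReal_sum, Complex.ofReal_mul, hσ.ofReal_re_trace_mul hσ]
  exact_mod_cast h

theorem one_div_three_pow_mul_le_of_sq_le {m : ℕ} {S : ℝ} (hS : 0 ≤ S) (hS2 : S ^ 2 ≤ 3 ^ m * 2 ^ m) :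
    1 / 3 ^ m * S ≤ (2 / 3 : ℝ) ^ ((m : ℝ) / 2) := by
  rw [div_eq_mul_one_div (m : ℝ), Real.rpow_natCast_mul (by norm_num), ← Real.sqrt_eq_rpow,
    Real.le_sqrt (by positivity) (by positivity), div_pow, mul_pow, div_pow]
  field_simp
  exact hS2

theorem avg_abs_bloch_coeff_le {m : ℕ} (σ : Matrix (Fin m → Fin 2) (Fin m → Fin 2) ℂ)
    (hpos : σ.PosSemidef) (htr : σ.trace = 1) :
    (1 / 3 ^ m : ℝ) *
        ∑ y : Fin m → Fin 3, |(Matrix.trace (pauliT (fun i => (y i).succ) * σ)).re|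
      ≤ (2 / 3 : ℝ) ^ ((m : ℝ) / 2) := by
  set t : (Fin m → Fin 4) → ℝ := fun y => (pauliT y * σ).trace.re
  have hsum_sq : ∑ y, t y ^ 2 ≤ 2 ^ m := by
    have hpurity := hpos.re_trace_mul_self_le
    rw [htr] at hpurity
    rw [sum_sq_re_trace_pauliT_mul hpos.1]
    simpa using hpurity
  have hsum_sq_succ : ∑ y : Fin m → Fin 3, t (fun i => (y i).succ) ^ 2 ≤ 2 ^ m :=
    (Fintype.sum_comp_le_sum_of_injective (Fin.succ_injective _).comp_left
      fun y => sq_nonneg (t y)).trans hsum_sq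
  have hcs := sq_sum_le_card_mul_sum_sq (s := Finset.univ)
    (f := fun y : Fin m → Fin 3 => |t (fun i => (y i).succ)|)
  simp only [sq_abs, Finset.card_univ, Fintype.card_fun, Fintype.card_fin, Nat.cast_pow,
    Nat.cast_ofNat] at hcs
  exact one_div_three_pow_mul_le_of_sq_le (Finset.sum_nonneg fun _ _ => abs_nonneg _)
    (hcs.trans (by gcongr))
end

section
/- Let ρ_{VE} = Σ_v P(v)|v⟩⟨v| ⊗ ρ_v be a classical-quantum state such that the reduced state ρ_E = Σ_v P(v)ρ_v is the completely mixed state on a d-dimensional system E. Then N := {d·P(v)·ρ_v}_v is a valid POVM on E, and for any POVM M = {M_z} measured on E with outcome Z, the conditional Shannon entropy satisfies H(V|Z) ≥ min_σ H(N[σ]), where the minimum is over all density matrices σ and H(N[σ]) is the Shannon entropy of the distribution v ↦ d·P(v)·tr(ρ_v σ). -/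
open Matrix BigOperators
open scoped ComplexOrder

/-- Shannon entropy (base 2) of a distribution on a finite type. -/
noncomputable def shEnt {α : Type*} [Fintype α] (p : α → ℝ) : ℝ :=
  -∑ a, p a * Real.logb 2 (p a)

/-!
Conditioning on the outcome `z` turns the prior into the posterior
`P(v | z) = P(v) tr(M_z ρ_v) / P(z)`. Since `ρ_E = 𝟙/d`, the outcome has probability
`P(z) = tr(M_z) / d`, so the posterior is `d P(v) tr(ρ_v σ_z)` with the density matrix
`σ_z = M_z / tr M_z`: it is the outcome distribution `N[σ_z]` of the pretty-good measurement.
Hence every `H(V | Z = z)` is at least `inf_σ H(N[σ])`, and so is their average `H(V|Z)`.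
-/

section Entropy

variable {α β : Type*} [Fintype α] [Fintype β]

lemma shEnt_nonneg {p : α → ℝ} (hp : ∀ a, 0 ≤ p a) (hp_sum : ∑ a, p a = 1) :
    0 ≤ shEnt p := by
  rw [shEnt, neg_nonneg]
  refine Finset.sum_nonpos fun a _ => mul_nonpos_of_nonneg_of_nonpos (hp a) ?_
  refine Real.logb_nonpos one_lt_two (hp a) ?_
  exact hp_sum ▸ Finset.single_le_sum (fun b _ => hp b) (Finset.mem_univ a)

lemma sum_mul_shEnt_div_sum {f : α → ℝ} (hf : ∀ a, 0 ≤ f a) :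
    (∑ a, f a) * shEnt (fun a => f a / ∑ b, f b)
      = shEnt f + (∑ a, f a) * Real.logb 2 (∑ a, f a) := by
  set q := ∑ a, f a
  by_cases hq : q = 0
  · have hf0 : ∀ a, f a = 0 := fun a =>
      (Finset.sum_eq_zero_iff_of_nonneg fun b _ => hf b).mp hq a (Finset.mem_univ a)
    simp [shEnt, hq, hf0]
  have hterm : ∀ a, q * (f a / q * Real.logb 2 (f a / q))
      = f a * Real.logb 2 (f a) - f a * Real.logb 2 q := fun a => by
    rcases eq_or_ne (f a) 0 with h | h
    · simp [h]
    · rw [Real.logb_div h hq]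
      field_simp
  simp only [shEnt, mul_neg, Finset.mul_sum, hterm, Finset.sum_sub_distrib, ← Finset.sum_mul]
  ring

lemma shEnt_sub_shEnt_marginal {p : α × β → ℝ} (hp : ∀ x, 0 ≤ p x) :
    shEnt p - shEnt (fun b => ∑ a, p (a, b))
      = ∑ b, (∑ a, p (a, b)) * shEnt (fun a => p (a, b) / ∑ a', p (a', b)) := by
  simp only [sum_mul_shEnt_div_sum fun a => hp (a, _)]
  simp only [shEnt, Fintype.sum_prod_type_right, Finset.sum_add_distrib, Finset.sum_neg_distrib]
  ring

lemma le_sum_mul_of_le {w h : β → ℝ} {c : ℝ} (hw : ∀ b, 0 ≤ w b) (hw1 : ∑ b, w b = 1)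
    (hc : ∀ b, w b ≠ 0 → c ≤ h b) : c ≤ ∑ b, w b * h b :=
  calc c = ∑ b, w b * c := by rw [← Finset.sum_mul, hw1, one_mul]
    _ ≤ ∑ b, w b * h b := Finset.sum_le_sum fun b _ => by
      rcases eq_or_ne (w b) 0 with h0 | h0
      · simp [h0]
      · exact mul_le_mul_of_nonneg_left (hc b h0) (hw b)

end Entropy

namespace Matrix.PosSemidef

variable {n 𝕜 : Type*} [Fintype n] [RCLike 𝕜]

open scoped MatrixOrder in
lemma trace_mul_nonneg {A B : Matrix n n 𝕜} (hA : A.PosSemidef) (hB : B.PosSemidef) :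
    0 ≤ (A * B).trace := by
  classical
  obtain ⟨C, rfl⟩ := CStarAlgebra.nonneg_iff_eq_star_mul_self.mp hB.nonneg
  rw [star_eq_conjTranspose, ← Matrix.mul_assoc, trace_mul_comm, ← Matrix.mul_assoc]
  exact (hA.mul_mul_conjTranspose_same C).trace_nonneg

lemma re_trace_mul_nonneg {A B : Matrix n n ℂ} (hA : A.PosSemidef) (hB : B.PosSemidef) :
    0 ≤ (A * B).trace.re :=
  (Complex.nonneg_iff.mp (hA.trace_mul_nonneg hB)).1

end Matrix.PosSemidef

section ClassicalQuantum

variable {V : Type*} [Fintype V] {d : ℕ} {P : V → ℝ} {ρ : V → Matrix (Fin d) (Fin d) ℂ}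

/-- `{H(N[σ]) | σ a density matrix}` for the pretty-good measurement `N_v = d P(v) ρ_v`. -/
def prettyGoodEntropies (P : V → ℝ) (ρ : V → Matrix (Fin d) (Fin d) ℂ) : Set ℝ :=
  {h : ℝ | ∃ σ : Matrix (Fin d) (Fin d) ℂ, σ.PosSemidef ∧ σ.trace = 1 ∧
    h = shEnt (fun v : V => d * P v * (Matrix.trace (ρ v * σ)).re)}

lemma sum_mul_re_trace_mul (hmix : ∑ v, P v • ρ v = ((d : ℂ))⁻¹ • 1)
    (A : Matrix (Fin d) (Fin d) ℂ) :
    ∑ v, P v * (A * ρ v).trace.re = (d : ℝ)⁻¹ * A.trace.re := by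
  have := congrArg (fun X => (A * X).trace.re) hmix
  simpa [Matrix.mul_sum, Matrix.trace_sum, Complex.re_sum] using this

lemma sum_natCast_mul_smul_eq_one (hmix : ∑ v, P v • ρ v = ((d : ℂ))⁻¹ • 1)
    (hd : d ≠ 0) :
    ∑ v, ((d : ℂ) * P v) • ρ v = 1 := by
  calc ∑ v, ((d : ℂ) * P v) • ρ v = (d : ℂ) • ∑ v, P v • ρ v := by
        simp_rw [Finset.smul_sum, ← Complex.coe_smul, smul_smul]
    _ = 1 := by rw [hmix, smul_smul, mul_inv_cancel₀ (Nat.cast_ne_zero.mpr hd), one_smul]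

lemma sum_natCast_mul_re_trace_mul_eq_one (hmix : ∑ v, P v • ρ v = ((d : ℂ))⁻¹ • 1)
    (hd : d ≠ 0) {σ : Matrix (Fin d) (Fin d) ℂ} (hσ : σ.trace = 1) :
    ∑ v, d * P v * (ρ v * σ).trace.re = 1 := by
  simp_rw [trace_mul_comm (ρ _), mul_assoc, ← Finset.mul_sum, sum_mul_re_trace_mul hmix, hσ,
    Complex.one_re, mul_one]
  exact mul_inv_cancel₀ (Nat.cast_ne_zero.mpr hd)

lemma bddBelow_prettyGoodEntropies (hP : ∀ v, 0 ≤ P v) (hρ : ∀ v, (ρ v).PosSemidef)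
    (hmix : ∑ v, P v • ρ v = ((d : ℂ))⁻¹ • 1) (hd : d ≠ 0) :
    BddBelow (prettyGoodEntropies P ρ) := by
  refine ⟨0, ?_⟩
  rintro _ ⟨σ, hσ, hσ1, rfl⟩
  refine shEnt_nonneg (fun v => ?_) (sum_natCast_mul_re_trace_mul_eq_one hmix hd hσ1)
  exact mul_nonneg (mul_nonneg d.cast_nonneg (hP v)) ((hρ v).re_trace_mul_nonneg hσ)

lemma shEnt_posterior_mem_prettyGoodEntropies (hmix : ∑ v, P v • ρ v = ((d : ℂ))⁻¹ • 1)
    {M : Matrix (Fin d) (Fin d) ℂ} (hM : M.PosSemidef)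
    (hM0 : ∑ v, P v * (M * ρ v).trace.re ≠ 0) :
    shEnt (fun v => P v * (M * ρ v).trace.re / ∑ w, P w * (M * ρ w).trace.re)
      ∈ prettyGoodEntropies P ρ := by
  rw [sum_mul_re_trace_mul hmix] at hM0 ⊢
  set t := M.trace.re
  have ht : t ≠ 0 := right_ne_zero_of_mul hM0
  have hd : (d : ℝ) ≠ 0 := by simpa using left_ne_zero_of_mul hM0
  have htr : M.trace = t :=
    Complex.eq_re_of_ofReal_le (r := 0) (Complex.ofReal_zero ▸ hM.trace_nonneg)
  have ht0 : 0 ≤ t := (Complex.nonneg_iff.mp hM.trace_nonneg).1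
  refine ⟨t⁻¹ • M, hM.smul (inv_nonneg.mpr ht0), ?_, ?_⟩
  · rw [trace_smul, htr, Complex.real_smul, ← Complex.ofReal_mul, inv_mul_cancel₀ ht,
      Complex.ofReal_one]
  · congr 1
    funext v
    rw [Matrix.mul_smul, trace_smul, Complex.smul_re, trace_mul_comm, smul_eq_mul]
    field_simp

end ClassicalQuantum

theorem pretty_good_entropy_bound {V Z : Type*} [Fintype V] [Fintype Z] {d : ℕ}
    (P : V → ℝ) (hP : ∀ v, 0 ≤ P v) (hP1 : ∑ v, P v = 1)
    (ρ : V → Matrix (Fin d) (Fin d) ℂ)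
    (hρpos : ∀ v, (ρ v).PosSemidef) (hρtr : ∀ v, (ρ v).trace = 1)
    (hmix : ∑ v, P v • ρ v = ((d : ℂ))⁻¹ • 1)
    (M : Z → Matrix (Fin d) (Fin d) ℂ)
    (hMpos : ∀ z, (M z).PosSemidef) (hMsum : ∑ z, M z = 1) :
    -- the operators `d · P(v) · ρ_v` form a POVM
    ((∀ v, (((d : ℂ) * P v) • ρ v).PosSemidef) ∧
      ∑ v, ((d : ℂ) * P v) • ρ v = 1) ∧
    -- `H(V|Z) = H(VZ) - H(Z) ≥ inf_σ H(N[σ])`, inf over density matrices σ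
    shEnt (fun vz : V × Z => P vz.1 * (Matrix.trace (M vz.2 * ρ vz.1)).re)
        - shEnt (fun z : Z => ∑ v, P v * (Matrix.trace (M z * ρ v)).re)
      ≥ sInf {h : ℝ | ∃ σ : Matrix (Fin d) (Fin d) ℂ, σ.PosSemidef ∧ σ.trace = 1 ∧
          h = shEnt (fun v : V => d * P v * (Matrix.trace (ρ v * σ)).re)} := by
  have hd : d ≠ 0 := by
    rintro rfl
    obtain ⟨v, -, -⟩ := Finset.exists_ne_zero_of_sum_ne_zero (hP1.trans_ne one_ne_zero)
    simpa using hρtr v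
  refine ⟨⟨fun v => (hρpos v).smul ?_, sum_natCast_mul_smul_eq_one hmix hd⟩, ?_⟩
  · exact mul_nonneg d.cast_nonneg (Complex.zero_le_real.mpr (hP v))
  set p : V × Z → ℝ := fun vz => P vz.1 * (M vz.2 * ρ vz.1).trace.re
  have hp : ∀ x, 0 ≤ p x := fun x =>
    mul_nonneg (hP _) ((hMpos _).re_trace_mul_nonneg (hρpos _))
  have hp_sum : ∑ z, ∑ v, p (v, z) = 1 := by
    simp_rw [p, Finset.sum_comm (γ := Z), ← Finset.mul_sum, ← Complex.re_sum, ← trace_sum,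
      ← Finset.sum_mul, hMsum, one_mul, hρtr, Complex.one_re, mul_one, hP1]
  change shEnt p - shEnt (fun z => ∑ v, p (v, z)) ≥ sInf (prettyGoodEntropies P ρ)
  rw [shEnt_sub_shEnt_marginal hp]
  have hbdd := bddBelow_prettyGoodEntropies hP hρpos hmix hd
  refine le_sum_mul_of_le (fun z => Finset.sum_nonneg fun v _ => hp (v, z)) hp_sum fun z hz => ?_
  have hmem := shEnt_posterior_mem_prettyGoodEntropies hmix (hMpos z) hz
  exact csInf_le hbdd hmem
end
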